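/- Let T be a symmetric bilinear form and J, J̃ vectors on Minkowski space ℝ⁴ satisfying the local mass-charge inequality. Let X be a nonzero future-directed causal vector, let V₁, V₂ be real numbers with η(X,X) = V₁² + V₂², and let N be a future-directed timelike vector. Suppose η(N, T♯X) − V₁ * η(N,J) + V₂ * η(N,J̃) = 0. Then there exists χ ≥ 0 such that T(u,v) = χ * η(X,u) * η(X,v) for all u, v, J = (χ * V₁) • X, and J̃ = (−χ * V₂) • X. -/

import Mathlib

/-!
For future timelike `Z` the vector `T♯Z` is future causal, so the reverse Cauchy–Schwarz
inequality and the mass–charge inequality give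
`V₁ η(J,Z) - V₂ η(J̃,Z) ≤ √(η(X,X) η(T♯Z,T♯Z)) ≤ η(T♯Z,X) = T(Z,X)`.
Thus the linear functional `T(X,·) - V₁ η(J,·) + V₂ η(J̃,·)` is nonnegative on the open future
cone; the constraint says it vanishes at the interior point `N`, so it vanishes identically and
every inequality above is an equality. Equality in reverse Cauchy–Schwarz forces `T♯Z = c X`,
equality in the mass–charge inequality then forces `η(J,Z) = c V₁` and `η(J̃,Z) = -c V₂`, and
symmetry of `T` gives `c = χ η(X,Z)`. Since the future cone is open, these identities hold
everywhere.

Reverse Cauchy–Schwarz and its equality case both come from the identity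
`x₀² (η(x,y)² - η(x,x) η(y,y)) = η(x,x) |w|² + (x⃗ · w)²` with `w = x₀ y⃗ - y₀ x⃗`.
-/

noncomputable def eta (x y : Fin 4 → ℝ) : ℝ :=
  x 0 * y 0 - x 1 * y 1 - x 2 * y 2 - x 3 * y 3

theorem LinearMap.ext_on_isOpen {𝕜 E F : Type*} [NontriviallyNormedField 𝕜] [AddCommGroup E]
    [Module 𝕜 E] [TopologicalSpace E] [ContinuousAdd E] [ContinuousSMul 𝕜 E] [AddCommGroup F]
    [Module 𝕜 F] {U : Set E} (hU : IsOpen U) (hne : U.Nonempty) {f g : E →ₗ[𝕜] F}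
    (h : Set.EqOn f g U) : f = g := by
  refine LinearMap.ext_on (Submodule.eq_top_of_nonempty_interior' _ ?_) h
  exact (hU.interior_eq ▸ hne).mono (interior_mono Submodule.subset_span)

theorem LinearMap.eq_zero_of_isLocalMin {E : Type*} [NormedAddCommGroup E] [NormedSpace ℝ E]
    [FiniteDimensional ℝ E] {ℓ : E →ₗ[ℝ] ℝ} {a : E} (h : IsLocalMin ℓ a) : ℓ = 0 := by
  have := h.hasFDerivAt_eq_zero (LinearMap.toContinuousLinearMap ℓ).hasFDerivAt
  ext x
  simpa using congr($this x)

lemma sq_mul_sub_mul_le (V₁ V₂ a b : ℝ) :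
    (V₁ * a - V₂ * b) ^ 2 ≤ (V₁ ^ 2 + V₂ ^ 2) * (a ^ 2 + b ^ 2) := by
  nlinarith [sq_nonneg (V₂ * a + V₁ * b)]

lemma eq_mul_of_sq_add_sq_le {V₁ V₂ a b c : ℝ} (hle : a ^ 2 + b ^ 2 ≤ c ^ 2 * (V₁ ^ 2 + V₂ ^ 2))
    (heq : c * (V₁ ^ 2 + V₂ ^ 2) = V₁ * a - V₂ * b) : a = c * V₁ ∧ b = -(c * V₂) := by
  have h : (a - c * V₁) ^ 2 + (b + c * V₂) ^ 2 = a ^ 2 + b ^ 2 - c ^ 2 * (V₁ ^ 2 + V₂ ^ 2) := by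
    linear_combination 2 * c * heq
  constructor
  · nlinarith [sq_nonneg (a - c * V₁), sq_nonneg (b + c * V₂)]
  · nlinarith [sq_nonneg (a - c * V₁), sq_nonneg (b + c * V₂)]

lemma eta_comm (x y : Fin 4 → ℝ) : eta x y = eta y x := by
  unfold eta; ring

noncomputable def etaForm : LinearMap.BilinForm ℝ (Fin 4 → ℝ) :=
  LinearMap.mk₂ ℝ eta
    (fun _ _ _ ↦ by simp only [eta, Pi.add_apply]; ring)
    (fun _ _ _ ↦ by simp only [eta, Pi.smul_apply, smul_eq_mul]; ring)
    (fun _ _ _ ↦ by simp only [eta, Pi.add_apply]; ring)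
    (fun _ _ _ ↦ by simp only [eta, Pi.smul_apply, smul_eq_mul]; ring)

@[simp]
lemma etaForm_apply (x y : Fin 4 → ℝ) : etaForm x y = eta x y := rfl

lemma eta_smul_left (c : ℝ) (x y : Fin 4 → ℝ) : eta (c • x) y = c * eta x y := by
  simp only [← etaForm_apply, map_smul, LinearMap.smul_apply, smul_eq_mul]

lemma eq_of_forall_eta_eq {x y : Fin 4 → ℝ} (h : ∀ z, eta x z = eta y z) : x = y := by
  ext i
  have := h (Pi.single i 1)
  fin_cases i <;> simpa [eta] using this

def IsFutureCausal (x : Fin 4 → ℝ) : Prop := 0 ≤ eta x x ∧ 0 ≤ x 0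

def IsFutureTimelike (x : Fin 4 → ℝ) : Prop := 0 < eta x x ∧ 0 < x 0

lemma IsFutureTimelike.isFutureCausal {x : Fin 4 → ℝ} (hx : IsFutureTimelike x) :
    IsFutureCausal x :=
  ⟨hx.1.le, hx.2.le⟩

lemma isOpen_setOf_isFutureTimelike : IsOpen {x : Fin 4 → ℝ | IsFutureTimelike x} := by
  simp only [IsFutureTimelike, Set.ofPred_and]
  exact (isOpen_lt continuous_const (by unfold eta; fun_prop)).inter
    (isOpen_lt continuous_const (continuous_apply 0))

lemma linearMap_ext_of_isFutureTimelike {f g : (Fin 4 → ℝ) →ₗ[ℝ] ℝ}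
    (h : ∀ z, IsFutureTimelike z → f z = g z) : f = g :=
  LinearMap.ext_on_isOpen isOpen_setOf_isFutureTimelike
    ⟨Pi.single 0 1, by simp [IsFutureTimelike, eta]⟩ h

lemma eq_of_eta_eq_of_isFutureTimelike {x y : Fin 4 → ℝ}
    (h : ∀ z, IsFutureTimelike z → eta x z = eta y z) : x = y :=
  eq_of_forall_eta_eq fun z ↦ LinearMap.congr_fun
    (linearMap_ext_of_isFutureTimelike (f := etaForm x) (g := etaForm y) h) z

lemma sq_spatial_le (x y : Fin 4 → ℝ) :
    (x 1 * y 1 + x 2 * y 2 + x 3 * y 3) ^ 2 ≤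
      (x 1 ^ 2 + x 2 ^ 2 + x 3 ^ 2) * (y 1 ^ 2 + y 2 ^ 2 + y 3 ^ 2) := by
  nlinarith [sq_nonneg (x 1 * y 2 - x 2 * y 1), sq_nonneg (x 1 * y 3 - x 3 * y 1),
    sq_nonneg (x 2 * y 3 - x 3 * y 2)]

lemma eq_zero_of_eta_self_nonneg_of_apply_zero {x : Fin 4 → ℝ} (hx : 0 ≤ eta x x)
    (h0 : x 0 = 0) : x = 0 := by
  have hsum : ∑ i, x i ^ 2 = 0 := by
    unfold eta at hx
    rw [Fin.sum_univ_four, h0]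
    nlinarith [sq_nonneg (x 1), sq_nonneg (x 2), sq_nonneg (x 3)]
  ext i
  exact pow_eq_zero_iff two_ne_zero |>.1 <|
    (Finset.sum_eq_zero_iff_of_nonneg fun j _ ↦ sq_nonneg (x j)).1 hsum i (Finset.mem_univ i)

lemma IsFutureCausal.apply_zero_pos {x : Fin 4 → ℝ} (hx : IsFutureCausal x) (hne : x ≠ 0) :
    0 < x 0 :=
  hx.2.lt_of_ne fun h ↦ hne (eq_zero_of_eta_self_nonneg_of_apply_zero hx.1 h.symm)

lemma IsFutureCausal.eta_nonneg {x y : Fin 4 → ℝ} (hx : IsFutureCausal x)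
    (hy : IsFutureCausal y) : 0 ≤ eta x y := by
  obtain ⟨hxx, hx0⟩ := hx
  obtain ⟨hyy, hy0⟩ := hy
  unfold eta at *
  have hsq : (x 1 * y 1 + x 2 * y 2 + x 3 * y 3) ^ 2 ≤ (x 0 * y 0) ^ 2 :=
    (sq_spatial_le x y).trans (by rw [mul_pow]; gcongr <;> nlinarith)
  linarith [le_of_sq_le_sq hsq (mul_nonneg hx0 hy0)]

lemma eta_pos_of_isFutureTimelike {x z : Fin 4 → ℝ} (hx : 0 ≤ eta x x) (hx0 : 0 < x 0)
    (hz : IsFutureTimelike z) : 0 < eta x z := by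
  obtain ⟨hzz, hz0⟩ := hz
  unfold eta at *
  have hsq : (x 1 * z 1 + x 2 * z 2 + x 3 * z 3) ^ 2 < (x 0 * z 0) ^ 2 := by
    refine (sq_spatial_le x z).trans_lt ?_
    rw [mul_pow]
    exact mul_lt_mul' (by nlinarith) (by nlinarith) (by positivity) (by positivity)
  linarith [(abs_lt_of_sq_lt_sq' hsq (by positivity)).2]

lemma apply_zero_nonneg_of_eta_nonneg {x z : Fin 4 → ℝ} (hx : 0 ≤ eta x x)
    (hz : IsFutureTimelike z) (hxz : 0 ≤ eta x z) : 0 ≤ x 0 := by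
  by_contra! hx0
  have h := eta_pos_of_isFutureTimelike (x := -x) (by simpa [eta] using hx) (by simpa using hx0) hz
  simp only [eta, Pi.neg_apply] at h hxz
  linarith

lemma sq_mul_eta_sub (x y : Fin 4 → ℝ) :
    x 0 ^ 2 * (eta x y ^ 2 - eta x x * eta y y) =
      eta x x * ((x 0 * y 1 - y 0 * x 1) ^ 2 + (x 0 * y 2 - y 0 * x 2) ^ 2
        + (x 0 * y 3 - y 0 * x 3) ^ 2)
      + (x 1 * (x 0 * y 1 - y 0 * x 1) + x 2 * (x 0 * y 2 - y 0 * x 2)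
        + x 3 * (x 0 * y 3 - y 0 * x 3)) ^ 2 := by
  unfold eta; ring

lemma mul_le_sq_eta {x : Fin 4 → ℝ} (hx : 0 ≤ eta x x) (y : Fin 4 → ℝ) :
    eta x x * eta y y ≤ eta x y ^ 2 := by
  by_contra! hlt
  have hx0 : x 0 = 0 := by
    have h : 0 ≤ x 0 ^ 2 * (eta x y ^ 2 - eta x x * eta y y) := by
      rw [sq_mul_eta_sub]; positivity
    exact pow_eq_zero_iff two_ne_zero |>.1 <| le_antisymm (by nlinarith) (sq_nonneg _)
  simp [eq_zero_of_eta_self_nonneg_of_apply_zero hx hx0, eta] at hlt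

lemma smul_eq_smul_of_sq_eta_le {x y : Fin 4 → ℝ} (hx : 0 ≤ eta x x) (hy : 0 ≤ eta y y)
    (h : eta x y ^ 2 ≤ eta x x * eta y y) : x 0 • y = y 0 • x := by
  have hxw := sq_mul_eta_sub x y
  have hyw := sq_mul_eta_sub y x
  rw [eta_comm y x] at hyw
  obtain ⟨w, hw⟩ : ∃ w : Fin 4 → ℝ, w = x 0 • y - y 0 • x := ⟨_, rfl⟩
  have hwi : ∀ i, w i = x 0 * y i - y 0 * x i := by simp [hw]
  rw [← hwi, ← hwi, ← hwi] at hxw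
  have hw' : ∀ i, y 0 * x i - x 0 * y i = -w i := by simp [hwi]
  rw [hw', hw', hw'] at hyw
  -- `h` makes both identities force `x⃗ · w = y⃗ · w = 0`, and `|w|² = x₀ (y⃗ · w) - y₀ (x⃗ · w)`
  have hxw0 : x 1 * w 1 + x 2 * w 2 + x 3 * w 3 = 0 := by
    refine pow_eq_zero_iff two_ne_zero |>.1 <| le_antisymm ?_ (sq_nonneg _)
    nlinarith [mul_nonneg hx (by positivity : (0:ℝ) ≤ w 1 ^ 2 + w 2 ^ 2 + w 3 ^ 2)]
  have hyw0 : y 1 * w 1 + y 2 * w 2 + y 3 * w 3 = 0 := by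
    refine pow_eq_zero_iff two_ne_zero |>.1 <| le_antisymm ?_ (sq_nonneg _)
    nlinarith [mul_nonneg hy (by positivity : (0:ℝ) ≤ (-w 1) ^ 2 + (-w 2) ^ 2 + (-w 3) ^ 2)]
  have hsq : w 1 ^ 2 + w 2 ^ 2 + w 3 ^ 2 = 0 := by
    linear_combination x 0 * hyw0 - y 0 * hxw0 + w 1 * hwi 1 + w 2 * hwi 2 + w 3 * hwi 3
  have hw0 : w 0 = 0 := by rw [hwi]; ring
  have hww : eta w w = 0 := by unfold eta; rw [hw0]; linear_combination -hsq
  rw [← sub_eq_zero, ← hw]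
  exact eq_zero_of_eta_self_nonneg_of_apply_zero hww.ge hw0

def LocalMassCharge (T : LinearMap.BilinForm ℝ (Fin 4 → ℝ)) (Tsharp : (Fin 4 → ℝ) → Fin 4 → ℝ)
    (J Jt : Fin 4 → ℝ) : Prop :=
  ∀ Z, IsFutureCausal Z → 0 ≤ T Z Z ∧ eta J Z ^ 2 + eta Jt Z ^ 2 ≤ eta (Tsharp Z) (Tsharp Z)

namespace LocalMassCharge

variable {T : LinearMap.BilinForm ℝ (Fin 4 → ℝ)} {Tsharp : (Fin 4 → ℝ) → Fin 4 → ℝ}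
  {J Jt X Z : Fin 4 → ℝ} {V₁ V₂ : ℝ}

lemma isFutureCausal_sharp (h : LocalMassCharge T Tsharp J Jt)
    (hTs : ∀ x u, eta (Tsharp x) u = T x u) (hZ : IsFutureTimelike Z) :
    IsFutureCausal (Tsharp Z) := by
  obtain ⟨hZZ, hJ⟩ := h Z hZ.isFutureCausal
  have hsharp : 0 ≤ eta (Tsharp Z) (Tsharp Z) :=
    (add_nonneg (sq_nonneg _) (sq_nonneg _)).trans hJ
  exact ⟨hsharp, apply_zero_nonneg_of_eta_nonneg hsharp hZ (hTs Z Z ▸ hZZ)⟩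

lemma sq_le_mul_eta_sharp (h : LocalMassCharge T Tsharp J Jt) (hV : eta X X = V₁ ^ 2 + V₂ ^ 2)
    (hZ : IsFutureCausal Z) :
    (V₁ * eta J Z - V₂ * eta Jt Z) ^ 2 ≤ eta X X * eta (Tsharp Z) (Tsharp Z) :=
  calc _ ≤ (V₁ ^ 2 + V₂ ^ 2) * (eta J Z ^ 2 + eta Jt Z ^ 2) := sq_mul_sub_mul_le ..
    _ ≤ _ := by rw [hV]; gcongr; exact (h Z hZ).2

lemma mul_sub_mul_le_apply (h : LocalMassCharge T Tsharp J Jt)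
    (hTs : ∀ x u, eta (Tsharp x) u = T x u) (hX : IsFutureCausal X)
    (hV : eta X X = V₁ ^ 2 + V₂ ^ 2) (hZ : IsFutureTimelike Z) :
    V₁ * eta J Z - V₂ * eta Jt Z ≤ T Z X := by
  have hS := h.isFutureCausal_sharp hTs hZ
  rw [← hTs]
  refine le_of_sq_le_sq ?_ (hS.eta_nonneg hX)
  calc _ ≤ eta X X * eta (Tsharp Z) (Tsharp Z) := h.sq_le_mul_eta_sharp hV hZ.isFutureCausal
    _ ≤ _ := by rw [mul_comm]; exact mul_le_sq_eta hS.1 X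

lemma apply_eq_of_constraint (h : LocalMassCharge T Tsharp J Jt) (hT : ∀ x y, T x y = T y x)
    (hTs : ∀ x u, eta (Tsharp x) u = T x u) (hX : IsFutureCausal X)
    (hV : eta X X = V₁ ^ 2 + V₂ ^ 2) {N : Fin 4 → ℝ} (hN : IsFutureTimelike N)
    (hconstraint : eta N (Tsharp X) - V₁ * eta N J + V₂ * eta N Jt = 0) (u : Fin 4 → ℝ) :
    T X u = V₁ * eta J u - V₂ * eta Jt u := by
  set ℓ := T X - V₁ • etaForm J + V₂ • etaForm Jt
  have hℓ : ∀ Z, ℓ Z = T X Z - V₁ * eta J Z + V₂ * eta Jt Z := fun Z ↦ by simp [ℓ]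
  have hmin : IsLocalMin ℓ N := by
    filter_upwards [isOpen_setOf_isFutureTimelike.mem_nhds hN] with Z hZ
    have := h.mul_sub_mul_le_apply hTs hX hV hZ
    rw [hℓ, hℓ, ← hTs X N, eta_comm, eta_comm J, eta_comm Jt, hconstraint, hT X Z]
    linarith
  have := LinearMap.congr_fun (LinearMap.eq_zero_of_isLocalMin hmin) u
  rw [hℓ, LinearMap.zero_apply] at this
  linarith

lemma exists_apply_eq_mul_eta (h : LocalMassCharge T Tsharp J Jt)
    (hTs : ∀ x u, eta (Tsharp x) u = T x u) (hX : IsFutureCausal X) (hX0 : 0 < X 0)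
    (hV : eta X X = V₁ ^ 2 + V₂ ^ 2) (hZ : IsFutureTimelike Z)
    (heq : T Z X = V₁ * eta J Z - V₂ * eta Jt Z) :
    ∃ c, 0 ≤ c ∧ (∀ u, T Z u = c * eta X u) ∧ eta J Z = c * V₁ ∧ eta Jt Z = -(c * V₂) := by
  have hS := h.isFutureCausal_sharp hTs hZ
  have hpar : Tsharp Z 0 • X = X 0 • Tsharp Z := by
    refine smul_eq_smul_of_sq_eta_le hS.1 hX.1 ?_
    rw [hTs, heq, mul_comm (eta _ _)]
    exact h.sq_le_mul_eta_sharp hV hZ.isFutureCausal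
  have hsharp : Tsharp Z = (Tsharp Z 0 / X 0) • X := by
    rw [div_eq_inv_mul, mul_smul, hpar, smul_smul, inv_mul_cancel₀ hX0.ne', one_smul]
  set c := Tsharp Z 0 / X 0
  have hTZ : ∀ u, T Z u = c * eta X u := fun u ↦ by rw [← hTs, hsharp, eta_smul_left]
  refine ⟨c, div_nonneg hS.2 hX0.le, hTZ, eq_mul_of_sq_add_sq_le ?_ ?_⟩
  · calc _ ≤ eta (Tsharp Z) (Tsharp Z) := (h Z hZ.isFutureCausal).2
      _ = _ := by rw [hsharp, eta_smul_left, eta_comm, eta_smul_left, hV]; ring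
  · rw [← hV, ← heq, hTZ]

end LocalMassCharge

lemma exists_chargedDust_of_isFutureTimelike {T : LinearMap.BilinForm ℝ (Fin 4 → ℝ)}
    {J Jt X N : Fin 4 → ℝ} {V₁ V₂ : ℝ} (hT : ∀ x y, T x y = T y x) (hN : IsFutureTimelike N)
    (hXN : 0 < eta X N)
    (h : ∀ Z, IsFutureTimelike Z →
      ∃ c, 0 ≤ c ∧ (∀ u, T Z u = c * eta X u) ∧ eta J Z = c * V₁ ∧ eta Jt Z = -(c * V₂)) :
    ∃ χ : ℝ, 0 ≤ χ ∧ (∀ u v : Fin 4 → ℝ, T u v = χ * eta X u * eta X v)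
      ∧ J = (χ * V₁) • X ∧ Jt = (-χ * V₂) • X := by
  obtain ⟨cN, hcN, hTN, -⟩ := h N hN
  set χ := cN / eta X N
  have hscale : ∀ Z, IsFutureTimelike Z →
      (∀ u, T Z u = χ * eta X Z * eta X u) ∧ eta J Z = χ * V₁ * eta X Z ∧
        eta Jt Z = -χ * V₂ * eta X Z := by
    intro Z hZ
    obtain ⟨c, -, hTZ, hJ, hJt⟩ := h Z hZ
    have hc : c = χ * eta X Z := by
      rw [div_mul_eq_mul_div, eq_div_iff hXN.ne', ← hTZ, hT, hTN]
    subst hc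
    exact ⟨hTZ, by rw [hJ]; ring, by rw [hJt]; ring⟩
  refine ⟨χ, div_nonneg hcN hXN.le, fun u v ↦ ?_, ?_, ?_⟩
  · have := linearMap_ext_of_isFutureTimelike (f := T.flip v) (g := (χ * eta X v) • etaForm X)
      fun Z hZ ↦ by
        simp only [LinearMap.BilinForm.flip_apply, (hscale Z hZ).1, LinearMap.smul_apply,
          etaForm_apply, smul_eq_mul]
        ring
    simpa [mul_right_comm] using LinearMap.congr_fun this u
  · refine eq_of_eta_eq_of_isFutureTimelike fun Z hZ ↦ ?_
    rw [(hscale Z hZ).2.1, eta_smul_left]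
  · refine eq_of_eta_eq_of_isFutureTimelike fun Z hZ ↦ ?_
    rw [(hscale Z hZ).2.2, eta_smul_left]

/-- Lemma 2.8 of the paper (charged dust form): if the local mass-charge
inequality holds, X is a nonzero future-directed causal vector with
η(X,X) = V₁² + V₂², N is future-directed timelike, and
η(N,T♯X) - V₁ η(N,J) + V₂ η(N,J̃) = 0, then T, J, J̃ describe charged dust. -/
theorem chargedDust_of_localMassCharge
    (T : LinearMap.BilinForm ℝ (Fin 4 → ℝ)) (hT : ∀ x y, T x y = T y x)
    (J Jt : Fin 4 → ℝ)
    (Tsharp : (Fin 4 → ℝ) → (Fin 4 → ℝ))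
    (hTs : ∀ x u, eta (Tsharp x) u = T x u)
    (hLMC : ∀ Z : Fin 4 → ℝ, eta Z Z ≥ 0 → Z 0 ≥ 0 →
        T Z Z ≥ 0 ∧ eta (Tsharp Z) (Tsharp Z) ≥ (eta J Z) ^ 2 + (eta Jt Z) ^ 2)
    (X : Fin 4 → ℝ) (hXne : X ≠ 0) (hXcausal : eta X X ≥ 0) (hXfut : X 0 ≥ 0)
    (V₁ V₂ : ℝ) (hV : eta X X = V₁ ^ 2 + V₂ ^ 2)
    (N : Fin 4 → ℝ) (hNt : eta N N > 0) (hNfut : N 0 > 0)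
    (hconstraint : eta N (Tsharp X) - V₁ * eta N J + V₂ * eta N Jt = 0) :
    ∃ χ : ℝ, 0 ≤ χ ∧ (∀ u v : Fin 4 → ℝ, T u v = χ * eta X u * eta X v)
      ∧ J = (χ * V₁) • X ∧ Jt = (-χ * V₂) • X := by
  have hmc : LocalMassCharge T Tsharp J Jt := fun Z hZ ↦ hLMC Z hZ.1 hZ.2
  have hX : IsFutureCausal X := ⟨hXcausal, hXfut⟩
  have hX0 : 0 < X 0 := hX.apply_zero_pos hXne
  have hN : IsFutureTimelike N := ⟨hNt, hNfut⟩
  have hTX := hmc.apply_eq_of_constraint hT hTs hX hV hN hconstraint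
  refine exists_chargedDust_of_isFutureTimelike hT hN (eta_pos_of_isFutureTimelike hX.1 hX0 hN)
    fun Z hZ ↦ hmc.exists_apply_eq_mul_eta hTs hX hX0 hV hZ ?_
  rw [hT, hTX]
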